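/- For every nonzero real t, the infinite product ∏_{m=1}^{∞} cos(t/2^m) converges to sin(t)/t. -/

import Mathlib

/-!
Doubling the angle `M` times, `sin t = 2^M sin (t/2^M) ∏_{m=1}^M cos (t/2^m)`. Since
`2^M sin (t/2^M) = t · sinc (t/2^M) → t` by continuity of `sinc` at `0`, dividing by it
gives the limit `sin t / t`.
-/

open Real Filter Topology

lemma Real.mul_sinc (x : ℝ) : x * sinc x = sin x := by
  rcases eq_or_ne x 0 with rfl | hx
  · simp
  · rw [sinc_of_ne_zero hx, mul_div_cancel₀ _ hx]

lemma prod_cos_div_two_pow_mul_sin (t : ℝ) (M : ℕ) :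
    (∏ m ∈ Finset.Icc 1 M, cos (t / 2 ^ m)) * (2 ^ M * sin (t / 2 ^ M)) = sin t := by
  induction M with
  | zero => simp
  | succ M ih =>
    have hdouble : sin (t / 2 ^ M) = 2 * sin (t / 2 ^ (M + 1)) * cos (t / 2 ^ (M + 1)) := by
      rw [← sin_two_mul]; ring_nf
    rw [Finset.prod_Icc_succ_top (by omega), ← ih, hdouble]
    ring

lemma tendsto_two_pow_mul_sin_div_two_pow (t : ℝ) :
    Tendsto (fun M : ℕ => 2 ^ M * sin (t / 2 ^ M)) atTop (𝓝 t) := by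
  have hangle : Tendsto (fun M : ℕ => t / 2 ^ M) atTop (𝓝 0) :=
    tendsto_const_nhds.div_atTop (tendsto_pow_atTop_atTop_of_one_lt one_lt_two)
  have hsinc : Tendsto (fun M : ℕ => t * sinc (t / 2 ^ M)) atTop (𝓝 t) := by
    simpa [sinc_zero] using (continuous_sinc.tendsto 0 |>.comp hangle).const_mul t
  refine hsinc.congr fun M => ?_
  rw [← mul_sinc, ← mul_assoc, mul_div_cancel₀ _ (by positivity)]

theorem viete_sinc (t : ℝ) (ht : t ≠ 0) :
    Filter.Tendsto (fun M : ℕ => ∏ m ∈ Finset.Icc 1 M, Real.cos (t / 2 ^ m))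
      Filter.atTop (nhds (Real.sin t / t)) := by
  have hden := tendsto_two_pow_mul_sin_div_two_pow t
  refine (tendsto_const_nhds.div hden ht).congr' ?_
  filter_upwards [hden.eventually_ne ht] with M hM
  rw [Pi.div_apply, ← prod_cos_div_two_pow_mul_sin t M, mul_div_cancel_right₀ _ hM]
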